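/- Let A be a countable index set, and for each α ∈ A let G_α be a second-countable profinite group with normalized Haar probability measure μ_α, and let T_α : G_α → G_α be a quotient-preserving map. Let G = ∏_{α ∈ A} G_α with product topology and product measure μ = ∏_{α ∈ A} μ_α (which is the normalized Haar measure on G), and let T = ∏_{α ∈ A} T_α act coordinatewise. For each α set D_α = { [G_α : N] : N ∈ F(T_α) }, the set of indices of the open normal subgroups in the finite factor set of T_α. Then T is measure-preserving and ergodic with respect to μ if and only if each T_α is measure-preserving and ergodic with respect to μ_α and for all distinct α, β ∈ A, every n ∈ D_α and m ∈ D_β satisfy gcd(n, m) = 1. -/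

import Mathlib

open MeasureTheory

/-- `T` factors through the quotient map `G → G/N`. -/
def MapFactorsThrough {G : Type*} [Group G] (T : G → G) (N : Subgroup G) : Prop :=
  ∀ x y : G, x⁻¹ * y ∈ N → (T x)⁻¹ * T y ∈ N

/-- `T` is a quotient-preserving map: the open normal subgroups through whose quotient
maps `T` factors contain a base of neighborhoods of the identity. -/
def QuotientPreserving {G : Type*} [Group G] [TopologicalSpace G] (T : G → G) : Prop :=
  ∀ U ∈ nhds (1 : G), ∃ N : Subgroup G,
    N.Normal ∧ IsOpen (N : Set G) ∧ (N : Set G) ⊆ U ∧ MapFactorsThrough T N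

/-!
Everything is read off the finite quotients `K ⧸ N`, `N ∈ F(T)`, on which `T` induces a self-map
`e_N`; Haar measure gives each coset of `N` mass `1 / [K : N]`, and these cosets form a π-system
generating the Borel sets. Then `T` is ergodic iff every `e_N` is a single cycle. If `T` is
ergodic, the preimage of an `e_N`-orbit is `T`-invariant (measure preservation makes `e_N`
preserve cardinalities) and of positive measure, hence full. Conversely, a single cycle is a
bijection, so `T` preserves the measure of every coset, hence `μ`; and a `T`-invariant set `S`
meets all cosets of `N` in equal measure, so it is independent of every coset, hence of itself,
and `μ S ∈ {0, 1}`.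

For `T = ∏ T_α` the subgroups `∏_{α ∈ I} N_α` (`I` finite, `N_α ∈ F(T_α)`) are cofinal in
`F(T)`, and a product of cycles of lengths `[G_α : N_α]` is a single cycle iff the lengths are
pairwise coprime (Chinese remainder theorem).
-/

open Function Topology

def IterateTransitive {X : Type*} (f : X → X) : Prop := ∀ x y, ∃ n, f^[n] x = y

namespace IterateTransitive

variable {X : Type*} {f : X → X}

theorem surjective (hf : IterateTransitive f) : Surjective f := by
  intro y
  obtain ⟨n, hn⟩ := hf (f y) y
  cases n with
  | zero => exact ⟨y, hn⟩
  | succ n => exact ⟨f^[n] (f y), by rwa [← iterate_succ_apply' f n]⟩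

theorem bijective [Finite X] (hf : IterateTransitive f) : Bijective f :=
  Finite.injective_iff_bijective.1 (Finite.injective_iff_surjective.2 hf.surjective)

theorem mem_periodicPts (hf : IterateTransitive f) (x : X) : x ∈ periodicPts f := by
  obtain ⟨n, hn⟩ := hf (f x) x
  exact ⟨n + 1, n.succ_pos, by rw [IsPeriodicPt, IsFixedPt, iterate_succ_apply, hn]⟩

theorem minimalPeriod_eq_card [Finite X] (hf : IterateTransitive f) (x : X) :
    minimalPeriod f x = Nat.card X := by
  have hpos := minimalPeriod_pos_of_mem_periodicPts (hf.mem_periodicPts x)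
  have himage : (f^[·] x) '' Set.Iio (minimalPeriod f x) = Set.univ := by
    refine Set.eq_univ_of_forall fun y => ?_
    obtain ⟨n, rfl⟩ := hf x y
    exact ⟨n % minimalPeriod f x, Nat.mod_lt n hpos, iterate_mod_minimalPeriod_eq⟩
  rw [← Set.ncard_univ, ← himage, iterate_injOn_Iio_minimalPeriod.ncard_image,
    Set.ncard_eq_toFinset_card', Set.toFinset_Iio, Nat.card_Iio]

theorem iterate_eq_iterate_iff [Finite X] (hf : IterateTransitive f) (x : X) {m n : ℕ} :
    f^[m] x = f^[n] x ↔ m ≡ n [MOD Nat.card X] := by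
  have hpos := minimalPeriod_pos_of_mem_periodicPts (hf.mem_periodicPts x)
  rw [← iterate_mod_minimalPeriod_eq (n := m), ← iterate_mod_minimalPeriod_eq (n := n),
    iterate_eq_iterate_iff_of_lt_minimalPeriod (Nat.mod_lt m hpos) (Nat.mod_lt n hpos),
    hf.minimalPeriod_eq_card, Nat.ModEq]

end IterateTransitive

theorem IterateTransitive.exists_iterate_eq_of_coprime {ι : Type*} {X : ι → Type*}
    [∀ i, Finite (X i)] {f : ∀ i, X i → X i} {I : Finset ι}
    (hf : ∀ i ∈ I, IterateTransitive (f i))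
    (hI : (I : Set ι).Pairwise (Nat.Coprime on fun i => Nat.card (X i))) (x y : ∀ i, X i) :
    ∃ n, ∀ i ∈ I, (f i)^[n] (x i) = y i := by
  classical
  choose! t ht using fun i hi => hf i hi (x i) (y i)
  obtain ⟨n, hn⟩ := Nat.chineseRemainderOfFinset t (fun i => Nat.card (X i)) I
    (fun i _ => Nat.card_ne_zero.2 ⟨⟨x i⟩, inferInstance⟩) hI
  exact ⟨n, fun i hi => ((hf i hi).iterate_eq_iterate_iff (x i)).2 (hn i hi) |>.trans (ht i hi)⟩

theorem IterateTransitive.coprime_of_iterate {X Y : Type*} [Finite X] [Finite Y] {f : X → X}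
    {g : Y → Y} (hf : IterateTransitive f) (hg : IterateTransitive g) {x : X} {y : Y} {n : ℕ}
    (hx : f^[n] x = x) (hy : g^[n] y = g y) : (Nat.card X).Coprime (Nat.card Y) := by
  have h0 : n ≡ 0 [MOD Nat.card X] := (hf.iterate_eq_iterate_iff x).1 hx
  have h1 : n ≡ 1 [MOD Nat.card Y] := (hg.iterate_eq_iterate_iff y).1 hy
  have : n.Coprime (Nat.card Y) := by
    rw [Nat.Coprime, h1.gcd_eq, Nat.gcd_one_left]
  exact this.coprime_dvd_left (Nat.modEq_zero_iff_dvd.1 h0)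

namespace MapFactorsThrough

variable {K : Type*} [Group K] {T : K → K} {N : Subgroup K}

def quotientMap (hN : MapFactorsThrough T N) : K ⧸ N → K ⧸ N :=
  Quotient.map' T fun x y hxy => by
    rw [QuotientGroup.leftRel_apply] at hxy ⊢
    exact hN x y hxy

theorem semiconj_quotientMap (hN : MapFactorsThrough T N) :
    Semiconj ((↑) : K → K ⧸ N) T hN.quotientMap :=
  fun _ => rfl

@[simp]
theorem quotientMap_mk (hN : MapFactorsThrough T N) (x : K) :
    hN.quotientMap x = ((T x : K) : K ⧸ N) :=
  rfl

theorem quotientMap_iterate_mk (hN : MapFactorsThrough T N) (n : ℕ) (x : K) :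
    hN.quotientMap^[n] x = ((T^[n] x : K) : K ⧸ N) :=
  (hN.semiconj_quotientMap.iterate_right n x).symm

theorem iterateTransitive_quotientMap_iff (hN : MapFactorsThrough T N) :
    IterateTransitive hN.quotientMap ↔ ∀ x y : K, ∃ n, (T^[n] x)⁻¹ * y ∈ N := by
  simp only [IterateTransitive, QuotientGroup.forall_mk, quotientMap_iterate_mk, QuotientGroup.eq]

theorem iterateTransitive_of_semiconj {L : Type*} [Group L] {T' : L → L} {M : Subgroup L}
    (φ : K →* L) (hφ : Surjective φ) (hφT : Semiconj φ T T') (hN : MapFactorsThrough T N)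
    (hM : MapFactorsThrough T' M) (hNM : N ≤ M.comap φ) (h : IterateTransitive hN.quotientMap) :
    IterateTransitive hM.quotientMap := by
  rw [iterateTransitive_quotientMap_iff] at h ⊢
  intro x y
  obtain ⟨x, rfl⟩ := hφ x
  obtain ⟨y, rfl⟩ := hφ y
  obtain ⟨n, hn⟩ := h x y
  refine ⟨n, ?_⟩
  simpa [(hφT.iterate_right n).eq] using hNM hn

end MapFactorsThrough

section FiniteFactorSet

variable {K : Type*} [Group K] [TopologicalSpace K]

/-- `IsFiniteFactor T N` is the paper's `N ∈ F(T)`. -/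
structure IsFiniteFactor (T : K → K) (N : Subgroup K) : Prop where
  normal : N.Normal
  isOpen : IsOpen (N : Set K)
  mapFactorsThrough : MapFactorsThrough T N

theorem isFiniteFactor_iff {T : K → K} {N : Subgroup K} :
    IsFiniteFactor T N ↔ N.Normal ∧ IsOpen (N : Set K) ∧ MapFactorsThrough T N :=
  ⟨fun ⟨h₁, h₂, h₃⟩ => ⟨h₁, h₂, h₃⟩, fun ⟨h₁, h₂, h₃⟩ => ⟨h₁, h₂, h₃⟩⟩

variable {T : K → K}

theorem IsFiniteFactor.inf {N M : Subgroup K} (hN : IsFiniteFactor T N)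
    (hM : IsFiniteFactor T M) : IsFiniteFactor T (N ⊓ M) := by
  obtain ⟨hNn, hNo, hNT⟩ := hN
  obtain ⟨hMn, hMo, hMT⟩ := hM
  refine ⟨Subgroup.normal_inf_normal N M, hNo.inter hMo, fun x y hxy => ?_⟩
  exact ⟨hNT x y hxy.1, hMT x y hxy.2⟩

theorem IsFiniteFactor.comap {L : Type*} [Group L] [TopologicalSpace L] {T' : L → L}
    {M : Subgroup L} (φ : K →* L) (hφ : Continuous φ) (hφT : Semiconj φ T T')
    (hM : IsFiniteFactor T' M) : IsFiniteFactor T (M.comap φ) := by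
  obtain ⟨hMn, hMo, hMT⟩ := hM
  refine ⟨hMn.comap φ, hMo.preimage hφ, fun x y hxy => ?_⟩
  simpa [hφT.eq] using hMT (φ x) (φ y) (by simpa using hxy)

theorem QuotientPreserving.exists_isFiniteFactor_subset (hT : QuotientPreserving T) {U : Set K}
    (hU : U ∈ 𝓝 1) : ∃ N, IsFiniteFactor T N ∧ (N : Set K) ⊆ U := by
  obtain ⟨N, hNn, hNo, hNU, hNT⟩ := hT U hU
  exact ⟨N, ⟨hNn, hNo, hNT⟩, hNU⟩

end FiniteFactorSet

section Topology

variable {K : Type*} [Group K] [TopologicalSpace K] {T : K → K}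

def finiteFactorCells (T : K → K) : Set (Set K) :=
  {C | ∃ N, IsFiniteFactor T N ∧ ∃ q : K ⧸ N, C = (↑) ⁻¹' {q}}

theorem isPiSystem_finiteFactorCells : IsPiSystem (finiteFactorCells T) := by
  rintro _ ⟨N, hN, q, rfl⟩ _ ⟨M, hM, q', rfl⟩ ⟨z, rfl, rfl⟩
  refine ⟨N ⊓ M, hN.inf hM, z, ?_⟩
  ext y
  simp only [Set.mem_inter_iff, Set.mem_preimage, Set.mem_singleton_iff, QuotientGroup.eq,
    Subgroup.mem_inf]

variable [IsTopologicalGroup K]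

theorem isOpen_preimage_mk {N : Subgroup K} (hN : IsOpen (N : Set K)) (s : Set (K ⧸ N)) :
    IsOpen (((↑) : K → K ⧸ N) ⁻¹' s) :=
  have := QuotientGroup.discreteTopology hN
  (isOpen_discrete s).preimage continuous_quot_mk

theorem QuotientPreserving.continuous (hT : QuotientPreserving T) : Continuous T := by
  refine continuous_iff_continuousAt.2 fun x U hU => Filter.mem_map.2 ?_
  obtain ⟨N, hN, hNU⟩ := hT.exists_isFiniteFactor_subset
    ((continuous_const_mul (T x)).continuousAt.preimage_mem_nhds (by simpa using hU))
  filter_upwards [(isOpen_preimage_mk hN.isOpen {(x : K ⧸ N)}).mem_nhds rfl] with y hy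
  simpa using hNU (hN.mapFactorsThrough x y (QuotientGroup.eq.1 (Set.mem_singleton_iff.1 hy).symm))

theorem QuotientPreserving.isTopologicalBasis_finiteFactorCells (hT : QuotientPreserving T) :
    TopologicalSpace.IsTopologicalBasis (finiteFactorCells T) := by
  refine TopologicalSpace.isTopologicalBasis_of_isOpen_of_nhds ?_ fun x U hxU hU => ?_
  · rintro _ ⟨N, hN, q, rfl⟩
    exact isOpen_preimage_mk hN.isOpen {q}
  obtain ⟨N, hN, hNU⟩ := hT.exists_isFiniteFactor_subset
    ((continuous_const_mul x).continuousAt.preimage_mem_nhds (by simpa using hU.mem_nhds hxU))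
  refine ⟨_, ⟨N, hN, x, rfl⟩, rfl, fun y hy => ?_⟩
  simpa using hNU (QuotientGroup.eq.1 (Set.mem_singleton_iff.1 hy).symm)

end Topology

section Ergodic

variable {X : Type*} [MeasurableSpace X] {μ : Measure X} [IsProbabilityMeasure μ] {f : X → X}

theorem preErgodic_iff_prob_eq_zero_or_one :
    PreErgodic f μ ↔ ∀ S, MeasurableSet S → f ⁻¹' S = S → μ S = 0 ∨ μ S = 1 := by
  refine ⟨fun h S hS hfS => h.prob_eq_zero_or_one hS hfS, fun h => ⟨fun S hS hfS => ?_⟩⟩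
  rw [Filter.eventuallyConst_set', ae_eq_empty, ae_eq_univ, prob_compl_eq_zero_iff hS]
  exact h S hS hfS

theorem ergodic_iff_of_measurable (hf : Measurable f) :
    Ergodic f μ ↔ (∀ S, MeasurableSet S → μ (f ⁻¹' S) = μ S) ∧
      ∀ S, MeasurableSet S → f ⁻¹' S = S → μ S = 0 ∨ μ S = 1 := by
  rw [← preErgodic_iff_prob_eq_zero_or_one]
  refine ⟨fun h => ⟨fun S hS => h.measure_preimage hS.nullMeasurableSet, h.toPreErgodic⟩,
    fun ⟨hmp, he⟩ => ⟨⟨hf, Measure.ext fun S hS => ?_⟩, he⟩⟩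
  rw [Measure.map_apply hf hS, hmp S hS]

end Ergodic

section Haar

open scoped ENNReal

variable {K : Type*} [Group K] [TopologicalSpace K] [IsTopologicalGroup K] [MeasurableSpace K]
  [BorelSpace K] {T : K → K}

theorem QuotientPreserving.measure_ext [SecondCountableTopology K] (hT : QuotientPreserving T)
    {μ ν : Measure K} [IsFiniteMeasure μ]
    (h : ∀ N, IsFiniteFactor T N → ∀ q : K ⧸ N, μ ((↑) ⁻¹' {q}) = ν ((↑) ⁻¹' {q}))
    (huniv : μ Set.univ = ν Set.univ) : μ = ν := by
  refine ext_of_generate_finite _ ?_ (isPiSystem_finiteFactorCells (T := T)) ?_ huniv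
  · rw [BorelSpace.measurable_eq (α := K)]
    exact hT.isTopologicalBasis_finiteFactorCells.borel_eq_generateFrom
  · rintro _ ⟨N, hN, q, rfl⟩
    exact h N hN q

variable [CompactSpace K] {μ : Measure K}

theorem measure_preimage_mk [μ.IsMulLeftInvariant] {N : Subgroup K} (hN : IsOpen (N : Set K))
    (s : Set (K ⧸ N)) : μ ((↑) ⁻¹' s) = s.ncard * μ N := by
  have := Subgroup.quotient_finite_of_isOpen N hN
  have hcell (q : K ⧸ N) : μ ((↑) ⁻¹' {q}) = μ N :=
    QuotientGroup.induction_on q fun g => by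
      change μ {x : K | (x : K ⧸ N) = g} = _
      rw [QuotientGroup.eq_class_eq_leftCoset, measure_smul]
  rw [← s.toFinite.coe_toFinset, ← sum_measure_preimage_singleton _ fun q _ =>
      (isOpen_preimage_mk hN {q}).measurableSet, Finset.sum_congr rfl fun q _ => hcell q,
    Finset.sum_const, nsmul_eq_mul, Set.ncard_coe_finset]

theorem MapFactorsThrough.ncard_preimage_quotientMap [μ.IsHaarMeasure] {N : Subgroup K}
    (hN : MapFactorsThrough T N) (hNo : IsOpen (N : Set K)) (hT : MeasurePreserving T μ μ)
    (s : Set (K ⧸ N)) : (hN.quotientMap ⁻¹' s).ncard = s.ncard := by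
  have h := hT.measure_preimage (isOpen_preimage_mk hNo s).measurableSet.nullMeasurableSet
  change μ ((↑) ⁻¹' (hN.quotientMap ⁻¹' s)) = _ at h
  rw [measure_preimage_mk hNo, measure_preimage_mk hNo,
    ENNReal.mul_left_inj (hNo.measure_ne_zero μ ⟨1, N.one_mem⟩) (measure_ne_top μ _)] at h
  exact_mod_cast h

theorem MapFactorsThrough.iterateTransitive_of_ergodic [μ.IsHaarMeasure] [IsProbabilityMeasure μ]
    {N : Subgroup K} (hN : MapFactorsThrough T N) (hNo : IsOpen (N : Set K)) (hT : Ergodic T μ) :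
    IterateTransitive hN.quotientMap := by
  have := Subgroup.quotient_finite_of_isOpen N hNo
  intro a b
  set O := Set.range fun n => hN.quotientMap^[n] a
  -- the forward orbit of `a` is forward invariant, and the quotient map preserves cardinalities
  have hO : hN.quotientMap ⁻¹' O = O := by
    have hsub : O ⊆ hN.quotientMap ⁻¹' O := by
      rintro _ ⟨n, rfl⟩
      exact ⟨n + 1, iterate_succ_apply' _ _ _⟩
    exact (Set.eq_of_subset_of_ncard_le hsub
      (hN.ncard_preimage_quotientMap hNo hT.toMeasurePreserving O).le).symm
  have hOmeas := (isOpen_preimage_mk hNo O).measurableSet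
  have hμN := hNo.measure_ne_zero μ ⟨1, N.one_mem⟩
  have hO1 : μ ((↑) ⁻¹' O) = 1 := by
    have hTO : T ⁻¹' ((↑) ⁻¹' O) = (↑) ⁻¹' O := congrArg (((↑) : K → K ⧸ N) ⁻¹' ·) hO
    refine (hT.toPreErgodic.prob_eq_zero_or_one hOmeas hTO).resolve_left ?_
    rw [measure_preimage_mk hNo]
    exact mul_ne_zero (Nat.cast_ne_zero.2 (Set.ncard_ne_zero_of_mem (s := O) ⟨0, rfl⟩)) hμN
  rw [← prob_compl_eq_zero_iff hOmeas, ← Set.preimage_compl, measure_preimage_mk hNo,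
    mul_eq_zero, Nat.cast_eq_zero, Set.ncard_eq_zero, Set.compl_empty_iff] at hO1
  exact show b ∈ O from (hO1.resolve_right hμN).symm ▸ Set.mem_univ b

theorem index_mul_measure_eq_one [μ.IsMulLeftInvariant] [IsProbabilityMeasure μ]
    {N : Subgroup K} (hN : IsOpen (N : Set K)) : (N.index : ℝ≥0∞) * μ N = 1 := by
  rw [← measure_univ (μ := μ), ← Set.preimage_univ (f := ((↑) : K → K ⧸ N)),
    measure_preimage_mk hN, Set.ncard_univ, Subgroup.index_eq_card]

theorem MapFactorsThrough.measure_preimage_mk_inter [μ.IsHaarMeasure] [IsProbabilityMeasure μ]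
    {N : Subgroup K} (hN : MapFactorsThrough T N) (hNo : IsOpen (N : Set K))
    (hmp : MeasurePreserving T μ μ) (htr : IterateTransitive hN.quotientMap) {S : Set K}
    (hS : MeasurableSet S) (hTS : T ⁻¹' S = S) (q : K ⧸ N) :
    μ ((↑) ⁻¹' {q} ∩ S) = μ ((↑) ⁻¹' {q}) * μ S := by
  have := Subgroup.quotient_finite_of_isOpen N hNo
  have := Fintype.ofFinite (K ⧸ N)
  have hcell (q : K ⧸ N) : MeasurableSet (((↑) : K → K ⧸ N) ⁻¹' {q}) :=
    (isOpen_preimage_mk hNo {q}).measurableSet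
  set f : K ⧸ N → ℝ≥0∞ := fun q => μ ((↑) ⁻¹' {q} ∩ S)
  have hfe : f ∘ hN.quotientMap = f := funext fun q => by
    have hpre : T ⁻¹' ((↑) ⁻¹' {hN.quotientMap q} ∩ S) = (↑) ⁻¹' {q} ∩ S := by
      change (↑) ⁻¹' (hN.quotientMap ⁻¹' {hN.quotientMap q}) ∩ T ⁻¹' S = _
      rw [← Set.image_singleton, htr.bijective.1.preimage_image, hTS]
    change μ _ = μ ((↑) ⁻¹' {q} ∩ S)
    rw [← hpre, hmp.measure_preimage ((hcell _).inter hS).nullMeasurableSet]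
  have hconst (q' : K ⧸ N) : f q' = f q := by
    obtain ⟨n, rfl⟩ := htr q q'
    exact congrFun (iterate_invariant hfe n) q
  have hsum : (N.index : ℝ≥0∞) * f q = μ S := by
    have := sum_measure_preimage_singleton (μ := μ.restrict S) (f := ((↑) : K → K ⧸ N))
      Finset.univ fun q _ => hcell q
    simp only [Measure.restrict_apply (hcell _), Finset.coe_univ, Set.preimage_univ,
      Measure.restrict_apply_univ] at this
    rw [← this, Finset.sum_congr rfl fun q' _ => hconst q', Finset.sum_const, Finset.card_univ,
      nsmul_eq_mul, Subgroup.index_eq_card, Nat.card_eq_fintype_card]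
  rw [measure_preimage_mk hNo, Set.ncard_singleton, Nat.cast_one, one_mul, ← hsum, ← mul_assoc,
    mul_comm (μ N), index_mul_measure_eq_one hNo, one_mul]

variable [SecondCountableTopology K]

theorem QuotientPreserving.measurePreserving_of_iterateTransitive [μ.IsHaarMeasure]
    [IsFiniteMeasure μ] (hT : QuotientPreserving T)
    (h : ∀ N (hN : IsFiniteFactor T N), IterateTransitive hN.mapFactorsThrough.quotientMap) :
    MeasurePreserving T μ μ := by
  refine ⟨hT.continuous.measurable, hT.measure_ext (fun N hN q => ?_) ?_⟩
  · have := Subgroup.quotient_finite_of_isOpen N hN.isOpen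
    have hbij := (h N hN).bijective
    rw [Measure.map_apply hT.continuous.measurable (isOpen_preimage_mk hN.isOpen _).measurableSet]
    change μ ((↑) ⁻¹' (hN.mapFactorsThrough.quotientMap ⁻¹' {q})) = _
    rw [measure_preimage_mk hN.isOpen, measure_preimage_mk hN.isOpen,
      Set.ncard_preimage_of_injective_subset_range hbij.1 (by simp [hbij.2.range_eq])]
  · rw [Measure.map_apply hT.continuous.measurable MeasurableSet.univ, Set.preimage_univ]

theorem QuotientPreserving.preErgodic_of_iterateTransitive [μ.IsHaarMeasure]
    [IsProbabilityMeasure μ] (hT : QuotientPreserving T) (hmp : MeasurePreserving T μ μ)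
    (h : ∀ N (hN : IsFiniteFactor T N), IterateTransitive hN.mapFactorsThrough.quotientMap) :
    PreErgodic T μ := by
  refine preErgodic_iff_prob_eq_zero_or_one.2 fun S hS hTS => ?_
  -- an invariant set is independent of every finite factor cell, hence of itself
  have hind : μ.restrict S = μ S • μ := by
    refine hT.measure_ext (fun N hN q => ?_) (by simp)
    rw [Measure.restrict_apply (isOpen_preimage_mk hN.isOpen {q}).measurableSet,
      Measure.smul_apply, smul_eq_mul, mul_comm]
    exact hN.mapFactorsThrough.measure_preimage_mk_inter hN.isOpen hmp (h N hN) hS hTS q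
  have hSS : μ S * 1 = μ S * μ S := by
    simpa [hS] using congrArg (· S) hind
  rcases eq_or_ne (μ S) 0 with h0 | h0
  · exact .inl h0
  · exact .inr ((ENNReal.mul_right_inj h0 (measure_ne_top μ S)).1 hSS).symm

theorem QuotientPreserving.ergodic_iff [μ.IsHaarMeasure] [IsProbabilityMeasure μ]
    (hT : QuotientPreserving T) :
    Ergodic T μ ↔
      ∀ N (hN : IsFiniteFactor T N), IterateTransitive hN.mapFactorsThrough.quotientMap :=
  ⟨fun he _ hN => hN.mapFactorsThrough.iterateTransitive_of_ergodic hN.isOpen he, fun h =>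
    have hmp := hT.measurePreserving_of_iterateTransitive h
    ⟨hmp, hT.preErgodic_of_iterateTransitive hmp h⟩⟩

end Haar

section Pi

variable {A : Type*} {G : A → Type*} [∀ α, Group (G α)] [∀ α, TopologicalSpace (G α)]
  {T : ∀ α, G α → G α}

theorem IsFiniteFactor.pi {I : Set A} (hI : I.Finite) {N : ∀ α, Subgroup (G α)}
    (hN : ∀ α ∈ I, IsFiniteFactor (T α) (N α)) :
    IsFiniteFactor (Pi.map T) (Subgroup.pi I N) := by
  refine ⟨⟨fun x hx g α hα => (hN α hα).normal.conj_mem _ (hx α hα) (g α)⟩, ?_,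
    fun x y hxy α hα => (hN α hα).mapFactorsThrough (x α) (y α) (hxy α hα)⟩
  rw [Subgroup.coe_pi]
  exact isOpen_set_pi hI fun α hα => (hN α hα).isOpen

theorem exists_pi_subset_of_mem_nhds_one (hT : ∀ α, QuotientPreserving (T α))
    {U : Set (∀ α, G α)} (hU : U ∈ 𝓝 1) :
    ∃ I : Set A, I.Finite ∧ ∃ N : ∀ α, Subgroup (G α),
      (∀ α, IsFiniteFactor (T α) (N α)) ∧ (Subgroup.pi I N : Set (∀ α, G α)) ⊆ U := by
  obtain ⟨I, hI, t, ht, htU⟩ := Filter.mem_pi.1 (nhds_pi (a := (1 : ∀ α, G α)) ▸ hU)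
  choose N hN hNt using fun α => (hT α).exists_isFiniteFactor_subset (ht α)
  refine ⟨I, hI, N, hN, fun x hx => htU fun α hα => hNt α (hx α hα)⟩

theorem QuotientPreserving.piMap (hT : ∀ α, QuotientPreserving (T α)) :
    QuotientPreserving (Pi.map T) := by
  intro U hU
  obtain ⟨I, hI, N, hN, hNU⟩ := exists_pi_subset_of_mem_nhds_one hT hU
  obtain ⟨hn, ho, hf⟩ := IsFiniteFactor.pi (T := T) hI fun α _ => hN α
  exact ⟨_, hn, ho, hNU, hf⟩

theorem iterateTransitive_of_piMap
    (h : ∀ N (hN : IsFiniteFactor (Pi.map T) N), IterateTransitive hN.mapFactorsThrough.quotientMap)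
    (α : A) {N : Subgroup (G α)} (hN : IsFiniteFactor (T α) N) :
    IterateTransitive hN.mapFactorsThrough.quotientMap := by
  classical
  have hN' := IsFiniteFactor.comap (T := Pi.map T) (Pi.evalMonoidHom G α)
    (continuous_apply α) (fun _ => rfl) hN
  exact hN'.mapFactorsThrough.iterateTransitive_of_semiconj (Pi.evalMonoidHom G α)
    (fun g => ⟨Pi.mulSingle α g, Pi.mulSingle_eq_same α g⟩) (fun _ => rfl) hN.mapFactorsThrough
    le_rfl (h _ hN')

end Pi

section PiTransitive

variable {A : Type*} {G : A → Type*} [∀ α, Group (G α)] [∀ α, TopologicalSpace (G α)]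
  [∀ α, IsTopologicalGroup (G α)] [∀ α, CompactSpace (G α)] {T : ∀ α, G α → G α}

theorem coprime_index_of_piMap
    (h : ∀ N (hN : IsFiniteFactor (Pi.map T) N), IterateTransitive hN.mapFactorsThrough.quotientMap)
    {α β : A} (hαβ : α ≠ β) {N : Subgroup (G α)} {M : Subgroup (G β)}
    (hN : IsFiniteFactor (T α) N) (hM : IsFiniteFactor (T β) M) :
    N.index.Coprime M.index := by
  classical
  have hNM := IsFiniteFactor.inf
    (IsFiniteFactor.comap (T := Pi.map T) (Pi.evalMonoidHom G α) (continuous_apply α)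
      (fun _ => rfl) hN)
    (IsFiniteFactor.comap (T := Pi.map T) (Pi.evalMonoidHom G β) (continuous_apply β)
      (fun _ => rfl) hM)
  have : Finite (G α ⧸ N) := Subgroup.quotient_finite_of_isOpen N hN.isOpen
  have : Finite (G β ⧸ M) := Subgroup.quotient_finite_of_isOpen M hM.isOpen
  -- an iterate fixing the class of `1` in the `α`-factor and moving it one step in the `β`-factor
  obtain ⟨n, hnα, hnβ⟩ := (hNM.mapFactorsThrough.iterateTransitive_quotientMap_iff.1 (h _ hNM)) 1
    (Pi.mulSingle β (T β 1))
  simp only [Pi.map_iterate] at hnα hnβ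
  refine (iterateTransitive_of_piMap h α hN).coprime_of_iterate (iterateTransitive_of_piMap h β hM)
    (x := ((1 : G α) : G α ⧸ N)) (y := ((1 : G β) : G β ⧸ M)) (n := n) ?_ ?_
  · rw [MapFactorsThrough.quotientMap_iterate_mk, QuotientGroup.eq]
    simpa [Pi.mulSingle_eq_of_ne hαβ] using hnα
  · rw [MapFactorsThrough.quotientMap_iterate_mk, MapFactorsThrough.quotientMap_mk,
      QuotientGroup.eq]
    simpa using hnβ

theorem iterateTransitive_piMap (hT : ∀ α, QuotientPreserving (T α))
    (h : ∀ α N (hN : IsFiniteFactor (T α) N), IterateTransitive hN.mapFactorsThrough.quotientMap)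
    (hcop : ∀ α β, α ≠ β → ∀ (N : Subgroup (G α)) (M : Subgroup (G β)),
      IsFiniteFactor (T α) N → IsFiniteFactor (T β) M → N.index.Coprime M.index)
    {N : Subgroup (∀ α, G α)} (hN : IsFiniteFactor (Pi.map T) N) :
    IterateTransitive hN.mapFactorsThrough.quotientMap := by
  obtain ⟨I, hI, P, hP, hPN⟩ := exists_pi_subset_of_mem_nhds_one hT (hN.isOpen.mem_nhds N.one_mem)
  have hPI := IsFiniteFactor.pi hI fun α _ => hP α
  refine MapFactorsThrough.iterateTransitive_of_semiconj (T := Pi.map T) (T' := Pi.map T)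
    (MonoidHom.id _) surjective_id (fun _ => rfl) hPI.mapFactorsThrough hN.mapFactorsThrough hPN ?_
  have : ∀ α, Finite (G α ⧸ P α) := fun α => Subgroup.quotient_finite_of_isOpen _ (hP α).isOpen
  rw [MapFactorsThrough.iterateTransitive_quotientMap_iff]
  intro x y
  obtain ⟨n, hn⟩ := IterateTransitive.exists_iterate_eq_of_coprime (I := hI.toFinset)
    (fun α _ => h α _ (hP α))
    (fun α _ β _ hαβ => hcop α β hαβ _ _ (hP α) (hP β))
    (fun α => (x α : G α ⧸ P α)) (fun α => y α)
  refine ⟨n, fun α hα => ?_⟩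
  have := hn α (hI.mem_toFinset.2 hα)
  rw [MapFactorsThrough.quotientMap_iterate_mk, QuotientGroup.eq] at this
  simpa [Pi.map_iterate] using this

theorem forall_iterateTransitive_piMap_iff (hT : ∀ α, QuotientPreserving (T α)) :
    (∀ N (hN : IsFiniteFactor (Pi.map T) N), IterateTransitive hN.mapFactorsThrough.quotientMap) ↔
      (∀ α N (hN : IsFiniteFactor (T α) N), IterateTransitive hN.mapFactorsThrough.quotientMap) ∧
        ∀ α β, α ≠ β → ∀ (N : Subgroup (G α)) (M : Subgroup (G β)),
          IsFiniteFactor (T α) N → IsFiniteFactor (T β) M → N.index.Coprime M.index :=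
  ⟨fun h => ⟨fun α _ => iterateTransitive_of_piMap h α,
      fun _ _ hαβ _ _ hN hM => coprime_index_of_piMap h hαβ hN hM⟩,
    fun ⟨h, hcop⟩ _ => iterateTransitive_piMap hT h hcop⟩

end PiTransitive

theorem stmt17_general {A : Type*} [Countable A] (G : A → Type*) [∀ α, Group (G α)]
    [∀ α, TopologicalSpace (G α)] [∀ α, IsTopologicalGroup (G α)]
    [∀ α, CompactSpace (G α)]
    [∀ α, SecondCountableTopology (G α)]
    [∀ α, MeasurableSpace (G α)] [∀ α, BorelSpace (G α)]
    (μa : ∀ α, Measure (G α)) [∀ α, (μa α).IsHaarMeasure]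
    [∀ α, IsProbabilityMeasure (μa α)]
    -- μ is the product measure, i.e. the normalized Haar measure on the product group
    (μ : Measure (∀ α, G α)) [μ.IsHaarMeasure] [IsProbabilityMeasure μ]
    (T : ∀ α, G α → G α) (hT : ∀ α, QuotientPreserving (T α)) :
    -- the product map is measure-preserving and ergodic
    ((∀ S : Set (∀ α, G α), MeasurableSet S →
        μ ((fun (x : ∀ α, G α) α => T α (x α)) ⁻¹' S) = μ S) ∧
      (∀ S : Set (∀ α, G α), MeasurableSet S →
        (fun (x : ∀ α, G α) α => T α (x α)) ⁻¹' S = S → μ S = 0 ∨ μ S = 1)) ↔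
    -- iff each factor is measure-preserving and ergodic
    ((∀ α, (∀ S : Set (G α), MeasurableSet S → μa α (T α ⁻¹' S) = μa α S) ∧
        (∀ S : Set (G α), MeasurableSet S → T α ⁻¹' S = S → μa α S = 0 ∨ μa α S = 1)) ∧
      -- and the indices in the finite factor sets are pairwise coprime
      (∀ α β, α ≠ β → ∀ (N : Subgroup (G α)) (M : Subgroup (G β)),
        (N.Normal ∧ IsOpen (N : Set (G α)) ∧ MapFactorsThrough (T α) N) →
        (M.Normal ∧ IsOpen (M : Set (G β)) ∧ MapFactorsThrough (T β) M) →
        Nat.Coprime N.index M.index)) := by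
  have hprod := QuotientPreserving.piMap hT
  calc _ ↔ Ergodic (Pi.map T) μ := (ergodic_iff_of_measurable hprod.continuous.measurable).symm
    _ ↔ ∀ N (hN : IsFiniteFactor (Pi.map T) N),
        IterateTransitive hN.mapFactorsThrough.quotientMap := hprod.ergodic_iff
    _ ↔ _ := forall_iterateTransitive_piMap_iff hT
    _ ↔ _ := by
      refine and_congr (forall_congr' fun α => ?_) (by simp only [isFiniteFactor_iff])
      exact (hT α).ergodic_iff.symm.trans (ergodic_iff_of_measurable (hT α).continuous.measurable)

theorem stmt17 {A : Type*} [Countable A] (G : A → Type*) [∀ α, Group (G α)]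
    [∀ α, TopologicalSpace (G α)] [∀ α, IsTopologicalGroup (G α)]
    [∀ α, CompactSpace (G α)] [∀ α, T2Space (G α)] [∀ α, TotallyDisconnectedSpace (G α)]
    [∀ α, SecondCountableTopology (G α)]
    [∀ α, MeasurableSpace (G α)] [∀ α, BorelSpace (G α)]
    (μa : ∀ α, Measure (G α)) [∀ α, (μa α).IsHaarMeasure]
    [∀ α, IsProbabilityMeasure (μa α)]
    -- μ is the product measure, i.e. the normalized Haar measure on the product group
    (μ : Measure (∀ α, G α)) [μ.IsHaarMeasure] [IsProbabilityMeasure μ]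
    (T : ∀ α, G α → G α) (hT : ∀ α, QuotientPreserving (T α)) :
    -- the product map is measure-preserving and ergodic
    ((∀ S : Set (∀ α, G α), MeasurableSet S →
        μ ((fun (x : ∀ α, G α) α => T α (x α)) ⁻¹' S) = μ S) ∧
      (∀ S : Set (∀ α, G α), MeasurableSet S →
        (fun (x : ∀ α, G α) α => T α (x α)) ⁻¹' S = S → μ S = 0 ∨ μ S = 1)) ↔
    -- iff each factor is measure-preserving and ergodic
    ((∀ α, (∀ S : Set (G α), MeasurableSet S → μa α (T α ⁻¹' S) = μa α S) ∧
        (∀ S : Set (G α), MeasurableSet S → T α ⁻¹' S = S → μa α S = 0 ∨ μa α S = 1)) ∧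
      -- and the indices in the finite factor sets are pairwise coprime
      (∀ α β, α ≠ β → ∀ (N : Subgroup (G α)) (M : Subgroup (G β)),
        (N.Normal ∧ IsOpen (N : Set (G α)) ∧ MapFactorsThrough (T α) N) →
        (M.Normal ∧ IsOpen (M : Set (G β)) ∧ MapFactorsThrough (T β) M) →
        Nat.Coprime N.index M.index)) :=
  stmt17_general G μa μ T hT
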